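/- Let Z be a standard normal random variable and let R be a random variable independent of Z whose law has density f_R (the Lévy(0,1/2) density). Fix α > 0 and set X = R^α g(Z). Then P(X ≤ 0) = 0 and, for every x > 0, P(X ≤ x) = 1 - ∫₀^∞ f_R(r) / (1 + x r^{-α}) dr = F_X(x; α). -/

import Mathlib

/-!
Given `R = r > 0`, the event `X ≤ x` is `g(Z) ≤ x r^{-α}`, i.e. `Φ(Z) ≤ 1 - 1/(1 + x r^{-α})`.
Since `Φ` is the continuous distribution function of `Z`, `Φ(Z)` is uniform on `(0, 1)`, so this
conditional probability is `1 - 1/(1 + x r^{-α})`; by independence, `P(X ≤ x)` is its integral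
against the law of `R`. As `g > 0` and `R > 0` almost surely, `X > 0` almost surely.
-/

open MeasureTheory ProbabilityTheory Real Set Filter

/-- The standard normal distribution function. -/
noncomputable def Phi (z : ℝ) : ℝ :=
  ∫ t in Set.Iic z, (Real.sqrt (2 * Real.pi))⁻¹ * Real.exp (-(t ^ 2) / 2)

/-- The transformation `g(z) = (1 - Φ(z))⁻¹ - 1`. -/
noncomputable def g (z : ℝ) : ℝ := (1 - Phi z)⁻¹ - 1

/-- The Lévy(0, 1/2) density. -/
noncomputable def fR (r : ℝ) : ℝ :=
  if 0 < r then (Real.sqrt (4 * Real.pi * r ^ 3))⁻¹ * Real.exp (-(1 / (4 * r))) else 0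

/-- The marginal distribution function of the LRSM process. -/
noncomputable def FX (x α : ℝ) : ℝ :=
  1 - ∫ r in Set.Ioi (0:ℝ), fR r / (1 + x * r ^ (-α))

/-- The marginal density of the LRSM process. -/
noncomputable def fX (x α : ℝ) : ℝ :=
  ∫ r in Set.Ioi (0:ℝ), r ^ α * fR r / (x + r ^ α) ^ 2

open scoped NNReal

namespace ProbabilityTheory

variable (μ : Measure ℝ) [IsProbabilityMeasure μ]

lemma continuous_cdf [NullSingletonClass μ] : Continuous (cdf μ) := by
  refine continuous_iff_continuousAt.2 fun x => continuousAt_iff_continuous_left_right.2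
    ⟨?_, (cdf μ).right_continuous x⟩
  have hjump : cdf μ x - Function.leftLim (cdf μ) x ≤ 0 := by
    have h := (cdf μ).measure_singleton x
    rwa [measure_cdf, measure_singleton, eq_comm, ENNReal.ofReal_eq_zero] at h
  have hleft : Function.leftLim (cdf μ) x = cdf μ x :=
    le_antisymm ((monotone_cdf μ).leftLim_le le_rfl) (by linarith)
  exact continuousWithinAt_Iio_iff_Iic.1
    ((monotone_cdf μ).continuousWithinAt_Iio_iff_leftLim_eq.2 hleft)

lemma measure_cdf_le_eq (hμ : Continuous (cdf μ)) {p : ℝ} (hp₀ : 0 < p) (hp₁ : p < 1) :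
    μ {x | cdf μ x ≤ p} = ENNReal.ofReal p := by
  have hne : (cdf μ ⁻¹' {p}).Nonempty :=
    mem_range_of_exists_le_of_exists_ge hμ
      (((tendsto_cdf_atBot μ).eventually (gt_mem_nhds hp₀)).exists.imp fun _ => le_of_lt)
      (((tendsto_cdf_atTop μ).eventually (lt_mem_nhds hp₁)).exists.imp fun _ => le_of_lt)
  have hbdd : BddAbove (cdf μ ⁻¹' {p}) := by
    obtain ⟨b, hb⟩ := ((tendsto_cdf_atTop μ).eventually (lt_mem_nhds hp₁)).exists_forall_of_atTop
    refine ⟨b, fun y hy => le_of_not_gt fun hby => ?_⟩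
    exact (hb y hby.le).ne' hy
  set z := sSup (cdf μ ⁻¹' {p})
  have hz : cdf μ z = p := (isClosed_singleton.preimage hμ).csSup_mem hne hbdd
  have hset : {x | cdf μ x ≤ p} = Iic z := by
    ext x
    refine ⟨fun hx => mem_Iic.2 <| le_of_not_gt fun hzx => ?_, fun hx => hz ▸ monotone_cdf μ hx⟩
    have hpx : cdf μ x = p := le_antisymm hx (hz ▸ monotone_cdf μ hzx.le)
    exact hzx.not_ge (le_csSup hbdd hpx)
  rw [hset, ← ofReal_cdf, hz]

end ProbabilityTheory

lemma Phi_eq_cdf : Phi = cdf (gaussianReal 0 1) := by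
  ext z
  rw [cdf_eq_real, measureReal_def, gaussianReal_apply_eq_integral 0 one_ne_zero,
    ENNReal.toReal_ofReal (setIntegral_nonneg measurableSet_Iic
      fun t _ => gaussianPDFReal_nonneg 0 1 t)]
  simp [Phi, gaussianPDFReal]

lemma gaussianReal_ne_zero_of_volume_ne_zero (m : ℝ) {v : ℝ≥0} (hv : v ≠ 0) {s : Set ℝ}
    (hs : volume s ≠ 0) : gaussianReal m v s ≠ 0 :=
  mt (fun h => gaussianReal_absolutelyContinuous' m hv h) hs

lemma Phi_pos (z : ℝ) : 0 < Phi z := by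
  have h := gaussianReal_ne_zero_of_volume_ne_zero 0 one_ne_zero (s := Iic z) (by simp)
  rwa [← ofReal_cdf, ← Phi_eq_cdf, ne_eq, ENNReal.ofReal_eq_zero, not_le] at h

lemma Phi_lt_one (z : ℝ) : Phi z < 1 := by
  have h := gaussianReal_ne_zero_of_volume_ne_zero 0 one_ne_zero (s := (Iic z)ᶜ) (by simp)
  rwa [prob_compl_eq_one_sub measurableSet_Iic, ne_eq, tsub_eq_zero_iff_le, not_le,
    ← ofReal_cdf, ← Phi_eq_cdf, ENNReal.ofReal_lt_one] at h

lemma measurable_g : Measurable g :=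
  ((measurable_const.sub (Phi_eq_cdf ▸ (monotone_cdf _).measurable)).inv).sub measurable_const

lemma g_pos (z : ℝ) : 0 < g z := by
  have h := Phi_pos z
  have h' := Phi_lt_one z
  rw [g, sub_pos, one_lt_inv₀ (by linarith)]
  linarith

lemma g_le_iff {y : ℝ} (hy : 0 < y) (z : ℝ) : g z ≤ y ↔ Phi z ≤ 1 - (1 + y)⁻¹ := by
  rw [g, sub_le_iff_le_add', inv_le_comm₀ (by linarith [Phi_lt_one z]) (by linarith)]
  constructor <;> intro h <;> linarith

lemma gaussianReal_g_le {y : ℝ} (hy : 0 < y) :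
    gaussianReal 0 1 {z | g z ≤ y} = ENNReal.ofReal (1 - (1 + y)⁻¹) := by
  have hinv : (1 + y)⁻¹ < 1 := inv_lt_one_of_one_lt₀ (by linarith)
  have hinv' : 0 < (1 + y)⁻¹ := inv_pos.2 (by linarith)
  simp_rw [g_le_iff hy, Phi_eq_cdf]
  have := nullSingletonClass_gaussianReal (μ := 0) one_ne_zero
  exact measure_cdf_le_eq _ (continuous_cdf _) (by linarith) (by linarith)

lemma gaussianReal_rpow_mul_g_le {r x : ℝ} (hr : 0 < r) (hx : 0 < x) (α : ℝ) :
    gaussianReal 0 1 {z | r ^ α * g z ≤ x} = ENNReal.ofReal (1 - (1 + x * r ^ (-α))⁻¹) := by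
  have hrα : 0 < r ^ α := rpow_pos_of_pos hr α
  have hset : {z | r ^ α * g z ≤ x} = {z | g z ≤ x * r ^ (-α)} := by
    ext z
    rw [mem_ofPred_eq, mem_ofPred_eq, rpow_neg hr.le, ← div_eq_mul_inv, le_div_iff₀ hrα, mul_comm]
  rw [hset, gaussianReal_g_le (mul_pos hx (rpow_pos_of_pos hr _))]

lemma ProbabilityTheory.IndepFun.measure_preimage_eq_lintegral {Ω α β : Type*}
    [MeasurableSpace Ω] [MeasurableSpace α] [MeasurableSpace β] {P : Measure Ω}
    [IsFiniteMeasure P] {Z : Ω → α} {R : Ω → β} (hZ : Measurable Z) (hR : Measurable R)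
    (hindep : IndepFun Z R P) {s : Set (α × β)} (hs : MeasurableSet s) :
    P ((fun ω => (Z ω, R ω)) ⁻¹' s) = ∫⁻ r, P.map Z ((fun z => (z, r)) ⁻¹' s) ∂P.map R := by
  rw [← Measure.map_apply (hZ.prodMk hR) hs,
    (indepFun_iff_map_prod_eq_prod_map_map hZ.aemeasurable hR.aemeasurable).1 hindep,
    Measure.prod_apply_symm hs]

lemma measurable_fR : Measurable fR :=
  Measurable.ite measurableSet_Ioi (by fun_prop) measurable_const

lemma fR_nonneg (r : ℝ) : 0 ≤ fR r := by
  unfold fR; split <;> positivity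

lemma ae_pos_withDensity_fR :
    ∀ᵐ r ∂volume.withDensity (fun r => ENNReal.ofReal (fR r)), 0 < r := by
  rw [ae_withDensity_iff measurable_fR.ennreal_ofReal]
  refine ae_of_all _ fun r hr => by_contra fun hr' => hr ?_
  simp [fR, hr']

lemma integral_withDensity_fR (v : ℝ → ℝ) :
    ∫ r, v r ∂volume.withDensity (fun r => ENNReal.ofReal (fR r))
      = ∫ r in Ioi 0, fR r * v r := by
  rw [integral_withDensity_eq_integral_toReal_smul measurable_fR.ennreal_ofReal
    (ae_of_all _ fun _ => ENNReal.ofReal_lt_top) v]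
  simp_rw [ENNReal.toReal_ofReal (fR_nonneg _), smul_eq_mul]
  refine (setIntegral_eq_integral_of_forall_compl_eq_zero fun r hr => ?_).symm
  simp [fR, show ¬ 0 < r from hr]

lemma lintegral_ofReal_one_sub {X : Type*} [MeasurableSpace X] {ν : Measure X}
    [IsProbabilityMeasure ν] {v : X → ℝ}
    (hv : Measurable v) (hv₀ : ∀ᵐ r ∂ν, 0 ≤ v r) (hv₁ : ∀ᵐ r ∂ν, v r ≤ 1) :
    ∫⁻ r, ENNReal.ofReal (1 - v r) ∂ν = ENNReal.ofReal (1 - ∫ r, v r ∂ν) := by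
  have hint : Integrable v ν := by
    refine Integrable.of_bound hv.aestronglyMeasurable 1 ?_
    filter_upwards [hv₀, hv₁] with r h₀ h₁
    rwa [norm_of_nonneg h₀]
  have hint' : Integrable (fun r => 1 - v r) ν := (integrable_const 1).sub hint
  rw [← ofReal_integral_eq_lintegral_ofReal hint'
      (by filter_upwards [hv₁] with r h using sub_nonneg.2 h),
    integral_sub (integrable_const 1) hint]
  simp

lemma lintegral_gaussianReal_rpow_mul_g_le {ν : Measure ℝ} [IsProbabilityMeasure ν]
    (hν : ν = volume.withDensity fun r => ENNReal.ofReal (fR r)) (α : ℝ) {x : ℝ} (hx : 0 < x) :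
    ∫⁻ r, gaussianReal 0 1 {z | r ^ α * g z ≤ x} ∂ν
      = ENNReal.ofReal (1 - ∫ r in Ioi 0, fR r / (1 + x * r ^ (-α))) := by
  have hpos : ∀ᵐ r ∂ν, 0 < r := hν ▸ ae_pos_withDensity_fR
  have hq : ∀ᵐ r ∂ν, 0 < x * r ^ (-α) := by
    filter_upwards [hpos] with r hr using mul_pos hx (rpow_pos_of_pos hr _)
  calc ∫⁻ r, gaussianReal 0 1 {z | r ^ α * g z ≤ x} ∂ν
      = ∫⁻ r, ENNReal.ofReal (1 - (1 + x * r ^ (-α))⁻¹) ∂ν := by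
        refine lintegral_congr_ae ?_
        filter_upwards [hpos] with r hr using gaussianReal_rpow_mul_g_le hr hx α
    _ = ENNReal.ofReal (1 - ∫ r, (1 + x * r ^ (-α))⁻¹ ∂ν) := by
        refine lintegral_ofReal_one_sub (by fun_prop) ?_ ?_
        · filter_upwards [hq] with r hr using inv_nonneg.2 (by linarith)
        · filter_upwards [hq] with r hr using inv_le_one_of_one_le₀ (by linarith)
    _ = ENNReal.ofReal (1 - ∫ r in Ioi 0, fR r / (1 + x * r ^ (-α))) := by
        simp_rw [hν, integral_withDensity_fR, div_eq_mul_inv]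

theorem cdf_of_levy_random_scale_mixture_general
    {Ω : Type*} [MeasurableSpace Ω] (P : Measure Ω) [IsProbabilityMeasure P]
    (Z R : Ω → ℝ) (hZm : Measurable Z) (hRm : Measurable R)
    (hZ : Measure.map Z P = gaussianReal 0 1)
    (hR : Measure.map R P =
      MeasureTheory.volume.withDensity (fun r => ENNReal.ofReal (fR r)))
    (hindep : IndepFun Z R P)
    (α : ℝ) :
    P {ω | R ω ^ α * g (Z ω) ≤ 0} = 0 ∧
    ∀ x : ℝ, 0 < x →
      P {ω | R ω ^ α * g (Z ω) ≤ x}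
        = ENNReal.ofReal (1 - ∫ r in Set.Ioi (0:ℝ), fR r / (1 + x * r ^ (-α))) ∧
      P {ω | R ω ^ α * g (Z ω) ≤ x} = ENNReal.ofReal (FX x α) := by
  have hmixture (x : ℝ) : P {ω | R ω ^ α * g (Z ω) ≤ x}
      = ∫⁻ r, gaussianReal 0 1 {z | r ^ α * g z ≤ x} ∂P.map R := by
    rw [← hZ]
    exact hindep.measure_preimage_eq_lintegral hZm hRm
      (measurableSet_le ((measurable_snd.pow_const α).mul (measurable_g.comp measurable_fst))
        measurable_const)
  have := Measure.isProbabilityMeasure_map (μ := P) hRm.aemeasurable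
  refine ⟨?_, fun x hx => ?_⟩
  · refine (hmixture 0).trans (lintegral_eq_zero_of_ae_eq_zero ?_)
    filter_upwards [hR ▸ ae_pos_withDensity_fR] with r hr
    have hX (z : ℝ) : 0 < r ^ α * g z := mul_pos (rpow_pos_of_pos hr α) (g_pos z)
    simp [fun z => (hX z).not_ge]
  · have h := (hmixture x).trans (lintegral_gaussianReal_rpow_mul_g_le hR α hx)
    exact ⟨h, h⟩

/-- If `Z` is standard normal, `R` is independent of `Z` with Lévy(0,1/2)
density `fR`, `α > 0` and `X = R^α g(Z)`, then `P(X ≤ 0) = 0` and, for every `x > 0`,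
`P(X ≤ x) = 1 - ∫₀^∞ fR r / (1 + x r^{-α}) dr = F_X(x; α)`. -/
theorem cdf_of_levy_random_scale_mixture
    {Ω : Type*} [MeasurableSpace Ω] (P : Measure Ω) [IsProbabilityMeasure P]
    (Z R : Ω → ℝ) (hZm : Measurable Z) (hRm : Measurable R)
    (hZ : Measure.map Z P = gaussianReal 0 1)
    (hR : Measure.map R P =
      MeasureTheory.volume.withDensity (fun r => ENNReal.ofReal (fR r)))
    (hindep : IndepFun Z R P)
    (α : ℝ) (hα : 0 < α) :
    P {ω | R ω ^ α * g (Z ω) ≤ 0} = 0 ∧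
    ∀ x : ℝ, 0 < x →
      P {ω | R ω ^ α * g (Z ω) ≤ x}
        = ENNReal.ofReal (1 - ∫ r in Set.Ioi (0:ℝ), fR r / (1 + x * r ^ (-α))) ∧
      P {ω | R ω ^ α * g (Z ω) ≤ x} = ENNReal.ofReal (FX x α) :=
  cdf_of_levy_random_scale_mixture_general P Z R hZm hRm hZ hR hindep α
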